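/- Let P be a user distribution on relevance vectors over a finite document set X with metric D, and suppose P is conditionally L-continuous with respect to (X, D). Fix x ∈ X and subsets S, S' ⊆ X. Then for every n ∈ ℕ and every pair of finite sequences x_1, …, x_n and x'_1, …, x'_n that enumerate (possibly with repetitions) all documents of S and of S' respectively, one has |μ(x|Z_S) − μ(x|Z_{S'})| ≤ 4·Σ_{j=1}^{n} D(x_j, x'_j). -/

import Mathlib

open scoped Classical
open Finset

/-- Probability of an event under a distribution `P` on relevance vectors. -/
noncomputable def pr {X : Type*} [Fintype X] [DecidableEq X]
    (P : (X → Bool) → ℝ) (E : Set (X → Bool)) : ℝ :=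
  ∑ π : X → Bool, if π ∈ E then P π else 0

/-- Conditional probability `P(E | F)`. -/
noncomputable def condPr {X : Type*} [Fintype X] [DecidableEq X]
    (P : (X → Bool) → ℝ) (E F : Set (X → Bool)) : ℝ :=
  pr P (E ∩ F) / pr P F

/-- The event `Z_S` that all documents in `S` are irrelevant. -/
def ZS {X : Type*} (S : Finset X) : Set (X → Bool) :=
  {π | ∀ s ∈ S, π s = false}

/-- Conditional pointwise mean `μ(x | Z_S)`. -/
noncomputable def condMean {X : Type*} [Fintype X] [DecidableEq X]
    (P : (X → Bool) → ℝ) (x : X) (S : Finset X) : ℝ :=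
  condPr P {π | π x = true} (ZS S)

/-! Since `Z_{S ∪ S'} = Z_S ∩ Z_{S'}`, passing from conditioning on `Z_S` to conditioning on
`Z_{S ∪ S'}` moves `μ(x | ·)` by at most `P(Z_{S'}ᶜ | Z_S)`. By the union bound this is at most
`∑_j μ(x'_j | Z_S)`, and as `μ(x_j | Z_S) = 0`, continuity bounds the `j`-th term by `D(x_j, x'_j)`.
The same with `S` and `S'` exchanged, and the triangle inequality through `μ(x | Z_{S ∪ S'})`, give
the bound even with constant `2`. -/

lemma abs_div_sub_add_div_add_le {a b v w : ℝ} (hv : 0 < v) (ha : 0 ≤ a) (hav : a ≤ v)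
    (hb : 0 ≤ b) (hbw : b ≤ w) :
    |a / v - (a + b) / (v + w)| ≤ w / (v + w) := by
  have hvw : 0 < v + w := by linarith
  have hdiff : a / v - (a + b) / (v + w) = (a * w - b * v) / (v * (v + w)) := by
    field_simp
    ring
  have hnum : |a * w - b * v| ≤ v * w := abs_le.mpr ⟨by nlinarith, by nlinarith⟩
  rw [hdiff, abs_div, abs_of_pos (mul_pos hv hvw), div_le_div_iff₀ (mul_pos hv hvw) hvw]
  nlinarith

section Probability

variable {X : Type*} [Fintype X] [DecidableEq X] {P : (X → Bool) → ℝ}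

lemma pr_nonneg (hP0 : ∀ π, 0 ≤ P π) (E : Set (X → Bool)) : 0 ≤ pr P E :=
  sum_nonneg fun π _ => by split_ifs <;> simp [hP0 π]

lemma pr_mono (hP0 : ∀ π, 0 ≤ P π) {E F : Set (X → Bool)} (h : E ⊆ F) :
    pr P E ≤ pr P F :=
  sum_le_sum fun π _ => by
    by_cases hE : π ∈ E
    · simp [hE, h hE]
    · split_ifs <;> simp [hP0 π]

lemma pr_inter_add_inter_compl (E C : Set (X → Bool)) :
    pr P (E ∩ C) + pr P (E ∩ Cᶜ) = pr P E := by
  rw [pr, pr, pr, ← sum_add_distrib]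
  refine sum_congr rfl fun π _ => ?_
  by_cases hE : π ∈ E <;> by_cases hC : π ∈ C <;> simp [hE, hC]

lemma pr_iUnion_le (hP0 : ∀ π, 0 ≤ P π) {ι : Type*} [Fintype ι] (f : ι → Set (X → Bool)) :
    pr P (⋃ i, f i) ≤ ∑ i, pr P (f i) := by
  have hterm : ∀ i π, 0 ≤ if π ∈ f i then P π else 0 := fun i π => by
    split_ifs <;> simp [hP0 π]
  calc pr P (⋃ i, f i) ≤ ∑ π, ∑ i, if π ∈ f i then P π else 0 := by
        refine sum_le_sum fun π _ => ?_
        split_ifs with h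
        · obtain ⟨i, hπ⟩ := Set.mem_iUnion.mp h
          simpa [hπ] using single_le_sum (fun j _ => hterm j π) (mem_univ i)
        · exact sum_nonneg fun i _ => hterm i π
    _ = ∑ i, pr P (f i) := sum_comm

lemma condPr_mono (hP0 : ∀ π, 0 ≤ P π) {E F : Set (X → Bool)} (h : E ⊆ F) (B : Set (X → Bool)) :
    condPr P E B ≤ condPr P F B :=
  div_le_div_of_nonneg_right (pr_mono hP0 (Set.inter_subset_inter_left B h)) (pr_nonneg hP0 B)

lemma condPr_iUnion_le (hP0 : ∀ π, 0 ≤ P π) {ι : Type*} [Fintype ι] (f : ι → Set (X → Bool))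
    (B : Set (X → Bool)) :
    condPr P (⋃ i, f i) B ≤ ∑ i, condPr P (f i) B := by
  simp only [condPr]
  rw [Set.iUnion_inter, ← sum_div]
  exact div_le_div_of_nonneg_right (pr_iUnion_le hP0 _) (pr_nonneg hP0 B)

lemma abs_condPr_inter_sub_condPr_le (hP0 : ∀ π, 0 ≤ P π) (E B C : Set (X → Bool))
    (hBC : 0 < pr P (B ∩ C)) :
    |condPr P E (B ∩ C) - condPr P E B| ≤ condPr P Cᶜ B := by
  rw [condPr, condPr, condPr, ← pr_inter_add_inter_compl B C,
    ← pr_inter_add_inter_compl (E ∩ B) C, Set.inter_assoc, Set.inter_comm Cᶜ B]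
  exact abs_div_sub_add_div_add_le hBC (pr_nonneg hP0 _) (pr_mono hP0 Set.inter_subset_right)
    (pr_nonneg hP0 _) (pr_mono hP0 fun π h => ⟨h.1.2, h.2⟩)

end Probability

section ZS

variable {X : Type*}

lemma ZS_union [DecidableEq X] (S T : Finset X) : ZS (S ∪ T) = ZS S ∩ ZS T := by
  ext π
  simp [ZS, or_imp, forall_and]

lemma compl_ZS_subset_iUnion {ι : Type*} [Fintype ι] [DecidableEq X] {T : Finset X}
    {f : ι → X} (hT : T ⊆ univ.image f) :
    (ZS T)ᶜ ⊆ ⋃ i, {π | π (f i) = true} := by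
  intro π hπ
  obtain ⟨t, ht, hπt⟩ : ∃ t ∈ T, π t ≠ false := by simpa [ZS] using hπ
  obtain ⟨i, -, rfl⟩ := mem_image.mp (hT ht)
  exact Set.mem_iUnion.mpr ⟨i, by simpa using hπt⟩

end ZS

section condMean

variable {X : Type*} [Fintype X] [DecidableEq X] {P : (X → Bool) → ℝ}

lemma condMean_eq_zero_of_mem {x : X} {S : Finset X} (hx : x ∈ S) : condMean P x S = 0 := by
  have hempty : {π : X → Bool | π x = true} ∩ ZS S = ∅ :=
    Set.eq_empty_of_forall_notMem fun π ⟨h1, h2⟩ => by simp [h2 x hx] at h1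
  simp [condMean, condPr, hempty, pr]

lemma condMean_le_dist_of_mem [PseudoMetricSpace X] {S : Finset X}
    (hLip : ∀ y z, |condMean P y S - condMean P z S| ≤ dist y z) (x : X) {y : X} (hy : y ∈ S) :
    condMean P x S ≤ dist x y := by
  simpa [condMean_eq_zero_of_mem hy] using (abs_le.mp (hLip x y)).2

lemma condPr_compl_ZS_le_sum_condMean (hP0 : ∀ π, 0 ≤ P π) {ι : Type*} [Fintype ι]
    {T : Finset X} {f : ι → X} (hT : T ⊆ univ.image f) (S : Finset X) :
    condPr P (ZS T)ᶜ (ZS S) ≤ ∑ i, condMean P (f i) S :=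
  (condPr_mono hP0 (compl_ZS_subset_iUnion hT) _).trans (condPr_iUnion_le hP0 _ _)

lemma abs_condMean_union_sub_le [PseudoMetricSpace X] (hP0 : ∀ π, 0 ≤ P π) {S S' : Finset X}
    (hZ : 0 < pr P (ZS (S ∪ S')))
    (hLip : ∀ y z, |condMean P y S - condMean P z S| ≤ dist y z)
    {ι : Type*} [Fintype ι] {xs xs' : ι → X} (hxs : ∀ i, xs i ∈ S) (hxs' : S' ⊆ univ.image xs')
    (x : X) :
    |condMean P x (S ∪ S') - condMean P x S| ≤ ∑ i, dist (xs i) (xs' i) := by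
  rw [ZS_union] at hZ
  calc |condMean P x (S ∪ S') - condMean P x S| ≤ condPr P (ZS S')ᶜ (ZS S) := by
        rw [condMean, condMean, ZS_union]
        exact abs_condPr_inter_sub_condPr_le hP0 _ _ _ hZ
    _ ≤ ∑ i, condMean P (xs' i) S := condPr_compl_ZS_le_sum_condMean hP0 hxs' S
    _ ≤ ∑ i, dist (xs i) (xs' i) := sum_le_sum fun i _ => by
        rw [dist_comm]
        exact condMean_le_dist_of_mem hLip _ (hxs i)

end condMean

theorem condMean_diff_le_four_sum_dist_general
    {X : Type*} [Fintype X] [DecidableEq X] [MetricSpace X]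
    (P : (X → Bool) → ℝ)
    (hP0 : ∀ π, 0 ≤ P π)
    (hZ : ∀ S : Finset X, 0 < pr P (ZS S))
    (hLip : ∀ (x y : X) (S : Finset X),
      |condMean P x S - condMean P y S| ≤ dist x y)
    (x : X) (S S' : Finset X) (n : ℕ) (xs xs' : Fin n → X)
    (hxs : Finset.image xs Finset.univ = S)
    (hxs' : Finset.image xs' Finset.univ = S') :
    |condMean P x S - condMean P x S'| ≤ 4 * ∑ j, dist (xs j) (xs' j) := by
  have hmem : ∀ {T : Finset X} {ys : Fin n → X}, univ.image ys = T → ∀ j, ys j ∈ T :=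
    fun h j => h ▸ mem_image_of_mem _ (mem_univ j)
  have h₁ := abs_condMean_union_sub_le hP0 (hZ _) (hLip · · S) (hmem hxs) hxs'.ge x
  have h₂ := abs_condMean_union_sub_le hP0 (hZ _) (hLip · · S') (hmem hxs') hxs.ge x
  simp_rw [union_comm S' S, dist_comm (xs' _)] at h₂
  have hsum : 0 ≤ ∑ j, dist (xs j) (xs' j) := sum_nonneg fun _ _ => dist_nonneg
  have htri := abs_sub_le (condMean P x S) (condMean P x (S ∪ S')) (condMean P x S')
  rw [abs_sub_comm (condMean P x S) (condMean P x (S ∪ S'))] at htri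
  linarith

/-- for any sequences enumerating `S` and `S'` (possibly with
repetitions), `|μ(x|Z_S) − μ(x|Z_{S'})| ≤ 4 ∑_j D(x_j, x'_j)`. -/
theorem condMean_diff_le_four_sum_dist
    {X : Type*} [Fintype X] [DecidableEq X] [MetricSpace X]
    (P : (X → Bool) → ℝ)
    (hP0 : ∀ π, 0 ≤ P π) (hP1 : ∑ π : X → Bool, P π = 1)
    (hZ : ∀ S : Finset X, 0 < pr P (ZS S))
    (hLip : ∀ (x y : X) (S : Finset X),
      |condMean P x S - condMean P y S| ≤ dist x y)
    (x : X) (S S' : Finset X) (n : ℕ) (xs xs' : Fin n → X)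
    (hxs : Finset.image xs Finset.univ = S)
    (hxs' : Finset.image xs' Finset.univ = S') :
    |condMean P x S - condMean P x S'| ≤ 4 * ∑ j, dist (xs j) (xs' j) :=
  condMean_diff_le_four_sum_dist_general P hP0 hZ hLip x S S' n xs xs' hxs hxs'
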